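/- arXiv:0901.2953 — 4 statements merged into one kernel-verified Lean document; each statement's English description precedes it below -/
import Mathlib

section
/- For natural numbers s and j with 0 ≤ j ≤ s, ∑_{k=0}^{s} C(k,j)·C(s+k,k) = C(s+j,j)·C(2s+1, s+j+1). -/
/-! Since `C(j + d, j) · C(s + j + d, j + d) = C(s + j, j) · C(s + j + d, d)` (both count the splittings
of `s + j + d` objects into blocks of sizes `s`, `j`, `d`), Pascal's rule shows by induction on `d` that
the partial sum up to `k = j + d` is `C(s + j, j) · C(s + j + d + 1, d)`; take `d = s - j` and use
symmetry. -/

namespace Nat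

theorem choose_add_mul_choose (s j d : ℕ) :
    (s + j + d).choose (j + d) * (j + d).choose j = (s + j + d).choose d * (s + j).choose j := by
  rw [choose_mul (le_add_right j d), choose_symm_of_eq_add (show s + j + d = d + (s + j) by omega),
    choose_mul (le_add_left j s), show s + j + d - j = s + d by omega, add_tsub_cancel_left, add_tsub_cancel_right]
  exact congrArg _ choose_symm_add.symm

theorem sum_range_choose_mul_add_choose (s j d : ℕ) :
    ∑ k ∈ Finset.range (j + d + 1), k.choose j * (s + k).choose k =
      (s + j).choose j * (s + j + d + 1).choose d := by
  induction d with
  | zero =>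
    rw [Finset.sum_range_succ, Finset.sum_eq_zero fun k hk ↦ by
      rw [choose_eq_zero_of_lt (Finset.mem_range.mp hk), zero_mul]]
    simp
  | succ d ih =>
    have hterm : (j + (d + 1)).choose j * (s + (j + (d + 1))).choose (j + (d + 1)) =
        (s + j).choose j * (s + j + d + 1).choose (d + 1) := by
      rw [mul_comm, ← add_assoc s, choose_add_mul_choose, mul_comm, add_assoc (s + j)]
    rw [← add_assoc j d 1, Finset.sum_range_succ, ih, add_assoc j d 1, hterm, ← mul_add,
      ← choose_succ_succ']
    rfl

end Nat

theorem choose_sum_identity (s j : ℕ) (hj : j ≤ s) :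
    ∑ k ∈ Finset.range (s + 1), k.choose j * (s + k).choose k =
      (s + j).choose j * (2 * s + 1).choose (s + j + 1) := by
  have hpartial := Nat.sum_range_choose_mul_add_choose s j (s - j)
  rw [Nat.add_sub_cancel' hj, show s + j + (s - j) + 1 = 2 * s + 1 by omega] at hpartial
  rw [hpartial, Nat.choose_symm_of_eq_add (show 2 * s + 1 = (s - j) + (s + j + 1) by omega)]
end

section
/- For every natural number s ≥ 1, the vector a with entries a_j = (1/s!)·C(s,j)·C(s+j,j), j = 0,...,s, solves the linear system M·a = l, where M is the (s+1)×(s+1) matrix with entries M(i,j) = (-1)^j·((i+j)!/i!)·((2s+1)!/(s+j+1)!) and l is the vector with entries l_i = (-1)^i·C(s,i). -/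
/-!
Since `C(s+j, j) / (s+j+1)! = 1 / (s! j! (s+j+1))`, the `j`-th summand is a constant multiple of
`(-1)^j C(s,j) p(1+j) / (1+j+s)`, where `p = X (X+1) ⋯ (X+i-1)` has degree `i ≤ s`.
Dividing `p` by `X + s` leaves a quotient of degree `< s`, which the alternating binomial sum
(an `s`-th forward difference) annihilates; only the remainder `p(-s) = (-1)^i i! C(s,i)` survives,
multiplied by the beta-type sum `∑ (-1)^j C(s,j) / (s+j+1) = s!² / (2s+1)!`.
-/

open Finset Polynomial Nat fwdDiff

theorem sum_range_neg_one_pow_mul_choose_mul_eq_fwdDiff_iter {R : Type*} [CommRing R]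
    (f : R → R) (n : ℕ) (y : R) :
    ∑ k ∈ range (n + 1), (-1 : R) ^ k * n.choose k * f (y + k) =
      (-1) ^ n * (Δ_[1])^[n] f y := by
  rw [fwdDiff_iter_eq_sum_shift, mul_sum]
  refine sum_congr rfl fun k hk => ?_
  obtain ⟨d, rfl⟩ := Nat.exists_eq_add_of_le (Nat.lt_succ_iff.mp (mem_range.mp hk))
  rw [zsmul_eq_mul, nsmul_one, Nat.add_sub_cancel_left]
  push_cast
  have hd : (-1 : R) ^ d * (-1) ^ d = 1 := by rw [← pow_add, (Even.add_self d).neg_one_pow]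
  linear_combination -((-1 : R) ^ k * ((k + d).choose k : R) * f (y + k)) * hd

theorem sum_range_neg_one_pow_mul_choose_mul_eval_eq_zero {R : Type*} [CommRing R]
    {n : ℕ} {q : R[X]} (hq : q.degree < n) (y : R) :
    ∑ k ∈ range (n + 1), (-1 : R) ^ k * n.choose k * q.eval (y + k) = 0 := by
  rcases eq_or_ne q 0 with rfl | hq0
  · simp
  rw [sum_range_neg_one_pow_mul_choose_mul_eq_fwdDiff_iter (fun x => q.eval x),
    fwdDiff_iter_eq_zero_of_degree_lt ((natDegree_lt_iff_degree_lt hq0).mpr hq), Pi.zero_apply,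
    mul_zero]

theorem sum_range_neg_one_pow_mul_choose_mul_eval_div {K : Type*} [Field K] {n : ℕ} {p : K[X]}
    (hp : p.degree ≤ n) {y c : K} (hyc : ∀ k ∈ range (n + 1), y + k + c ≠ 0) :
    ∑ k ∈ range (n + 1), (-1 : K) ^ k * n.choose k * (p.eval (y + k) / (y + k + c)) =
      p.eval (-c) * ∑ k ∈ range (n + 1), (-1 : K) ^ k * n.choose k / (y + k + c) := by
  set q := p /ₘ (X - C (-c))
  have hq : q.degree < n := by
    rcases eq_or_ne p 0 with rfl | hp0
    · simp [q]
    · exact (degree_divByMonic_lt p _ hp0 (by rw [degree_X_sub_C]; exact one_pos)).trans_le hp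
  have hdiv : ∀ x, p.eval x = (x + c) * q.eval x + p.eval (-c) := fun x => by
    conv_lhs => rw [← modByMonic_add_div p (X - C (-c))]
    rw [modByMonic_X_sub_C_eq_C_eval]
    simp [q, add_comm]
  have hsplit : ∀ k ∈ range (n + 1), (-1 : K) ^ k * n.choose k * (p.eval (y + k) / (y + k + c)) =
      (-1 : K) ^ k * n.choose k * q.eval (y + k) +
        p.eval (-c) * ((-1 : K) ^ k * n.choose k / (y + k + c)) := fun k hk => by
    rw [hdiv]
    field_simp [hyc k hk]
  rw [sum_congr rfl hsplit, sum_add_distrib, sum_range_neg_one_pow_mul_choose_mul_eval_eq_zero hq,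
    zero_add, mul_sum]

theorem fwdDiff_iter_inv_add_one_natCast {K : Type*} [Field K] [CharZero K] (n m : ℕ) :
    (Δ_[1])^[n] (fun x : K => (x + 1)⁻¹) m = (-1) ^ n * n ! * m ! / (m + n + 1)! := by
  induction n generalizing m with
  | zero =>
    have hm : (m ! : K) ≠ 0 := Nat.cast_ne_zero.mpr m.factorial_ne_zero
    simp only [Function.iterate_zero, id_eq, pow_zero, factorial_zero, cast_one, mul_one,
      one_mul, add_zero, factorial_succ, cast_mul, cast_add]
    field_simp
  | succ n ih =>
    rw [Function.iterate_succ_apply', fwdDiff, ← Nat.cast_add_one, ih, ih,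
      show m + 1 + n + 1 = m + n + 1 + 1 by ring, show m + (n + 1) + 1 = m + n + 1 + 1 by ring,
      Nat.factorial_succ (m + n + 1), Nat.factorial_succ m, Nat.factorial_succ n]
    have hm : (m ! : K) ≠ 0 := Nat.cast_ne_zero.mpr m.factorial_ne_zero
    have hmn : ((m + n + 1)! : K) ≠ 0 := Nat.cast_ne_zero.mpr (m + n + 1).factorial_ne_zero
    have hmn' : (m + n + 1 + 1 : K) ≠ 0 := by exact_mod_cast (m + n + 1).succ_ne_zero
    push_cast
    field_simp
    ring

theorem sum_range_neg_one_pow_mul_choose_div {K : Type*} [Field K] [CharZero K] (n m : ℕ) :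
    ∑ k ∈ range (n + 1), (-1 : K) ^ k * n.choose k / (m + k + 1) = n ! * m ! / (m + n + 1)! := by
  have h := sum_range_neg_one_pow_mul_choose_mul_eq_fwdDiff_iter (fun x : K => (x + 1)⁻¹) n m
  rw [fwdDiff_iter_inv_add_one_natCast, mul_div_assoc, mul_assoc, ← mul_assoc, ← pow_add,
    (Even.add_self n).neg_one_pow, one_mul, ← mul_div_assoc] at h
  simpa only [div_eq_mul_inv] using h

theorem linear_system_term_eq (s i j : ℕ) :
    (-1 : ℚ) ^ j * (((i + j)! : ℚ) / i !) * (((2 * s + 1)! : ℚ) / (s + j + 1)!) *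
        (1 / (s ! : ℚ) * s.choose j * (s + j).choose j) =
      (2 * s + 1)! / (i ! * s ! ^ 2) *
        ((-1) ^ j * s.choose j * ((ascPochhammer ℚ i).eval (1 + j : ℚ) / (1 + j + s))) := by
  have hpoch : (j ! : ℚ) * (ascPochhammer ℚ i).eval (1 + j : ℚ) = (i + j)! := by
    rw [add_comm (1 : ℚ), add_comm i, factorial_mul_ascPochhammer]
  have hchoose : ((s + j).choose j : ℚ) * s ! * j ! = (s + j)! := by
    exact_mod_cast Nat.add_choose_mul_factorial_mul_factorial s j
  have hsucc : ((s + j + 1)! : ℚ) = (s + j + 1) * (s + j)! := by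
    push_cast [Nat.factorial_succ]; ring
  rw [← hpoch, hsucc, ← hchoose]
  have hchoose_ne : ((s + j).choose j : ℚ) ≠ 0 :=
    Nat.cast_ne_zero.mpr (Nat.choose_pos (by omega)).ne'
  have hden_ne : (1 + j + s : ℚ) ≠ 0 := by positivity
  field_simp
  ring

theorem linear_system_solution_general (s : ℕ) (i : ℕ) (hi : i ≤ s) :
    ∑ j ∈ Finset.range (s + 1),
        (-1 : ℚ) ^ j * (((i + j).factorial : ℚ) / (i.factorial : ℚ)) *
          (((2 * s + 1).factorial : ℚ) / ((s + j + 1).factorial : ℚ)) *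
          ((1 / (s.factorial : ℚ)) * (s.choose j) * ((s + j).choose j)) =
      (-1 : ℚ) ^ i * (s.choose i) := by
  have hdeg : (ascPochhammer ℚ i).degree ≤ s :=
    degree_le_of_natDegree_le ((ascPochhammer_natDegree ℚ i).trans_le hi)
  have hden : ∀ j ∈ range (s + 1), (1 : ℚ) + j + s ≠ 0 := fun j _ => by positivity
  have hroot : (ascPochhammer ℚ i).eval (-s : ℚ) = (-1) ^ i * i ! * s.choose i := by
    rw [ascPochhammer_eval_neg_eq_descPochhammer, descPochhammer_eval_eq_descFactorial,
      Nat.descFactorial_eq_factorial_mul_choose]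
    push_cast
    ring
  have hbeta : ∑ j ∈ range (s + 1), (-1 : ℚ) ^ j * s.choose j / (1 + j + s) =
      s ! * s ! / (2 * s + 1)! := by
    rw [two_mul, ← sum_range_neg_one_pow_mul_choose_div]
    exact sum_congr rfl fun j _ => by ring
  simp_rw [linear_system_term_eq]
  rw [← mul_sum, sum_range_neg_one_pow_mul_choose_mul_eval_div hdeg hden, hroot, hbeta]
  field_simp

theorem linear_system_solution (s : ℕ) (hs : 1 ≤ s) (i : ℕ) (hi : i ≤ s) :
    ∑ j ∈ Finset.range (s + 1),
        (-1 : ℚ) ^ j * (((i + j).factorial : ℚ) / (i.factorial : ℚ)) *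
          (((2 * s + 1).factorial : ℚ) / ((s + j + 1).factorial : ℚ)) *
          ((1 / (s.factorial : ℚ)) * (s.choose j) * ((s + j).choose j)) =
      (-1 : ℚ) ^ i * (s.choose i) :=
  linear_system_solution_general s i hi
end

section
/- For natural numbers i, s with 0 ≤ i ≤ s, ∑_{j=0}^{s} (-1)^j·((i+j)!/(i!·j!))·(j!·(2s+1)!/(s+j+1)!)·(1/s!)·C(s,j)·C(s+j,j) = (-1)^i·C(s,i). -/
open Finset Nat

/-- Pascal recursion for alternating binomial sums against an arbitrary weight. -/
lemma pascal_step (n : ℕ) (f : ℕ → ℚ) :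
    ∑ m ∈ Finset.range (n+2), (-1:ℚ)^m * ((n+1).choose m) * f m
    = (∑ m ∈ Finset.range (n+1), (-1:ℚ)^m * (n.choose m) * f m)
      - ∑ m ∈ Finset.range (n+1), (-1:ℚ)^m * (n.choose m) * f (m+1) := by
  rw [Finset.sum_range_succ' (fun m => (-1:ℚ)^m * ((n+1).choose m) * f m) (n+1)]
  have h1 : ∀ m ∈ Finset.range (n+1), (-1:ℚ)^(m+1) * ((n+1).choose (m+1)) * f (m+1)
      = -((-1:ℚ)^m * (n.choose m) * f (m+1)) + (-1:ℚ)^(m+1) * (n.choose (m+1)) * f (m+1) := by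
    intro m _
    rw [Nat.choose_succ_succ]
    push_cast
    ring
  rw [Finset.sum_congr rfl h1, Finset.sum_add_distrib]
  have h2 : (∑ m ∈ Finset.range (n+1), (-1:ℚ)^(m+1) * (n.choose (m+1)) * f (m+1))
      + (-1:ℚ)^0 * (((n+1).choose 0 : ℕ) : ℚ) * f 0
      = ∑ m ∈ Finset.range (n+1), (-1:ℚ)^m * (n.choose m) * f m := by
    have e : ∑ m ∈ Finset.range (n+2), (-1:ℚ)^m * (n.choose m) * f m
        = (∑ m ∈ Finset.range (n+1), (-1:ℚ)^(m+1) * (n.choose (m+1)) * f (m+1))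
          + (-1:ℚ)^0 * ((n.choose 0 : ℕ) : ℚ) * f 0 :=
      Finset.sum_range_succ' (fun m => (-1:ℚ)^m * (n.choose m) * f m) (n+1)
    rw [Finset.sum_range_succ] at e
    simp [Nat.choose_succ_self] at e ⊢
    linarith [e]
  rw [Finset.sum_neg_distrib] at *
  linarith [h2]

lemma K2 (n : ℕ) : ∀ a : ℕ, ∑ m ∈ Finset.range (n+1), (-1:ℚ)^m * (n.choose m) * (((a:ℚ)+m+1)⁻¹)
    = ((n.factorial : ℚ) * (a.factorial : ℚ)) / ((a+n+1).factorial : ℚ) := by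
  induction n with
  | zero =>
    intro a
    have h1 : ((a+0+1).factorial : ℚ) = ((a:ℚ)+1) * a.factorial := by
      rw [Nat.add_zero, Nat.factorial_succ]; push_cast; ring
    have ha : (a:ℚ)+1 ≠ 0 := by positivity
    have hf : (a.factorial : ℚ) ≠ 0 := by exact_mod_cast Nat.factorial_ne_zero a
    simp only [zero_add, Finset.sum_range_one, h1]
    push_cast
    field_simp
    simp
  | succ n ih =>
    intro a
    rw [pascal_step n (fun m => ((a:ℚ)+m+1)⁻¹)]
    have e2 : ∑ m ∈ Finset.range (n+1), (-1:ℚ)^m * (n.choose m) * (((a:ℚ)+((m+1:ℕ):ℚ)+1)⁻¹)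
        = ∑ m ∈ Finset.range (n+1), (-1:ℚ)^m * (n.choose m) * ((((a+1:ℕ):ℚ)+m+1)⁻¹) := by
      apply Finset.sum_congr rfl; intro m _; push_cast; ring_nf
    rw [e2]
    rw [ih a, ih (a+1)]
    have h1 : ((a+(n+1)+1).factorial : ℚ) = ((a:ℚ)+n+2) * ((a+n+1).factorial : ℚ) := by
      have : a+(n+1)+1 = (a+n+1)+1 := by ring
      rw [this, Nat.factorial_succ]; push_cast; ring
    have h2 : ((a+1+n+1).factorial : ℚ) = ((a:ℚ)+n+2) * ((a+n+1).factorial : ℚ) := by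
      have : a+1+n+1 = (a+n+1)+1 := by ring
      rw [this, Nat.factorial_succ]; push_cast; ring
    have h3 : (((a+1).factorial) : ℚ) = ((a:ℚ)+1) * a.factorial := by
      rw [Nat.factorial_succ]; push_cast; ring
    have h4 : (((n+1).factorial) : ℚ) = ((n:ℚ)+1) * n.factorial := by
      rw [Nat.factorial_succ]; push_cast; ring
    rw [h1, h2, h3, h4]
    have hf1 : ((a+n+1).factorial : ℚ) ≠ 0 := by exact_mod_cast Nat.factorial_ne_zero _
    have hx : (a:ℚ)+n+2 ≠ 0 := by positivity
    field_simp
    ring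

lemma K3 (s : ℕ) : ∀ i : ℕ, i ≤ s → ∀ x : ℕ,
    ∑ k ∈ Finset.range (i+1), (-1:ℚ)^k * (i.choose k) * (((x+k).choose s : ℕ) : ℚ)
    = (-1:ℚ)^i * ((x.choose (s-i) : ℕ) : ℚ) := by
  intro i
  induction i with
  | zero => intro _ x; simp
  | succ i ih =>
    intro hi x
    have hi' : i ≤ s := Nat.le_of_succ_le hi
    rw [pascal_step i (fun k => (((x+k).choose s : ℕ) : ℚ))]
    have e2 : ∑ k ∈ Finset.range (i+1), (-1:ℚ)^k * (i.choose k) * (((x+(k+1)).choose s : ℕ) : ℚ)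
        = ∑ k ∈ Finset.range (i+1), (-1:ℚ)^k * (i.choose k) * ((((x+1)+k).choose s : ℕ) : ℚ) := by
      apply Finset.sum_congr rfl; intro k _
      have : x+(k+1) = (x+1)+k := by ring
      rw [this]
    rw [show (∑ k ∈ Finset.range (i+1), (-1:ℚ)^k * (i.choose k) * ((fun k => (((x+k).choose s : ℕ) : ℚ)) (k+1)))
        = ∑ k ∈ Finset.range (i+1), (-1:ℚ)^k * (i.choose k) * ((((x+1)+k).choose s : ℕ) : ℚ) from e2]
    rw [ih hi' x, ih hi' (x+1)]
    have hr : s - i = (s - (i+1)) + 1 := by omega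
    have pascal : (x+1).choose ((s-(i+1))+1) = x.choose (s-(i+1)) + x.choose ((s-(i+1))+1) :=
      Nat.choose_succ_succ x (s-(i+1))
    rw [hr, pascal]
    push_cast
    ring

lemma auxInnerSum (s k : ℕ) (hk : k ≤ s) :
    ∑ j ∈ Finset.range (s+1), (-1:ℚ)^j * (s.choose j) * (j.choose k) * (((s:ℚ)+j+1)⁻¹)
    = (-1:ℚ)^k * (s.choose k) * (((s-k).factorial : ℚ) * ((s+k).factorial : ℚ))
      / ((2*s+1).factorial : ℚ) := by
  have hzero : ∑ j ∈ Finset.range (s+1), (-1:ℚ)^j * (s.choose j) * (j.choose k) * (((s:ℚ)+j+1)⁻¹)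
      = ∑ j ∈ Finset.Ico k (s+1), (-1:ℚ)^j * (s.choose j) * (j.choose k) * (((s:ℚ)+j+1)⁻¹) := by
    rw [Finset.range_eq_Ico]
    rw [← Finset.sum_Ico_consecutive _ (Nat.zero_le k) (by omega : k ≤ s+1)]
    have : ∑ j ∈ Finset.Ico 0 k, (-1:ℚ)^j * (s.choose j) * (j.choose k) * (((s:ℚ)+j+1)⁻¹) = 0 := by
      apply Finset.sum_eq_zero
      intro j hj
      rw [Finset.mem_Ico] at hj
      rw [Nat.choose_eq_zero_of_lt hj.2]
      simp
    rw [this, zero_add]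
  rw [hzero, Finset.sum_Ico_eq_sum_range]
  have hrange : s + 1 - k = (s-k) + 1 := by omega
  rw [hrange]
  have hterm : ∀ m ∈ Finset.range ((s-k)+1),
      (-1:ℚ)^(k+m) * (s.choose (k+m)) * ((k+m).choose k) * (((s:ℚ)+((k+m:ℕ):ℚ)+1)⁻¹)
      = ((-1:ℚ)^k * (s.choose k)) * ((-1:ℚ)^m * ((s-k).choose m) * ((((s+k):ℕ):ℚ)+m+1)⁻¹) := by
    intro m hm
    rw [Finset.mem_range] at hm
    have hkm : k + m ≤ s := by omega
    have hmul : s.choose (k+m) * (k+m).choose k = s.choose k * (s-k).choose m := by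
      have := Nat.choose_mul (n := s) (k := k+m) (s := k) (Nat.le_add_right k m)
      simpa [Nat.add_sub_cancel_left] using this
    have hcast : ((s.choose (k+m) : ℕ) : ℚ) * (((k+m).choose k : ℕ) : ℚ)
        = ((s.choose k : ℕ) : ℚ) * (((s-k).choose m : ℕ) : ℚ) := by exact_mod_cast congrArg (Nat.cast : ℕ → ℚ) hmul
    push_cast
    push_cast at hcast
    calc (-1:ℚ)^(k+m) * (s.choose (k+m)) * ((k+m).choose k) * (((s:ℚ)+((k:ℚ)+(m:ℚ))+1)⁻¹)
        = (-1:ℚ)^(k+m) * ((s.choose (k+m)) * ((k+m).choose k)) * (((s:ℚ)+((k:ℚ)+m)+1)⁻¹) := by ring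
      _ = (-1:ℚ)^(k+m) * ((s.choose k) * ((s-k).choose m)) * (((s:ℚ)+((k:ℚ)+m)+1)⁻¹) := by rw [hcast]
      _ = ((-1:ℚ)^k * (s.choose k)) * ((-1:ℚ)^m * ((s-k).choose m) * (((s:ℚ)+(k:ℚ))+m+1)⁻¹) := by
          rw [pow_add]; ring
  rw [Finset.sum_congr rfl hterm, ← Finset.mul_sum]
  rw [K2 (s-k) (s+k)]
  have h2s : (s+k) + (s-k) + 1 = 2*s+1 := by omega
  rw [h2s]
  ring

lemma K1 (s i : ℕ) (hi : i ≤ s) :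
    ∑ j ∈ Finset.range (s+1), (-1:ℚ)^j * ((i+j).choose j) * (s.choose j) * (((s:ℚ)+j+1)⁻¹)
    = (-1:ℚ)^i * (s.choose i) * ((s.factorial : ℚ) * (s.factorial : ℚ))
      / ((2*s+1).factorial : ℚ) := by
  -- Vandermonde expansion of (i+j).choose j
  have vdm : ∀ j ∈ Finset.range (s+1), (((i+j).choose j : ℕ) : ℚ)
      = ∑ k ∈ Finset.range (s+1), ((i.choose k : ℕ) : ℚ) * ((j.choose k : ℕ) : ℚ) := by
    intro j hj
    rw [Finset.mem_range] at hj
    have hnat : (i+j).choose j = ∑ k ∈ Finset.range (j+1), i.choose k * j.choose (j-k) := by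
      rw [Nat.add_choose_eq, Finset.Nat.sum_antidiagonal_eq_sum_range_succ_mk]
    have hnat2 : (i+j).choose j = ∑ k ∈ Finset.range (j+1), i.choose k * j.choose k := by
      rw [hnat]
      apply Finset.sum_congr rfl
      intro k hk
      rw [Finset.mem_range] at hk
      rw [Nat.choose_symm (by omega : k ≤ j)]
    have hext : ∑ k ∈ Finset.range (j+1), i.choose k * j.choose k
        = ∑ k ∈ Finset.range (s+1), i.choose k * j.choose k := by
      apply Finset.sum_subset
      · intro k hk; rw [Finset.mem_range] at *; omega
      · intro k _ hk
        rw [Finset.mem_range] at hk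
        rw [Nat.choose_eq_zero_of_lt (by omega : j < k)]
        simp
    rw [hnat2, hext]
    push_cast
    rfl
  have expand : ∀ j ∈ Finset.range (s+1),
      (-1:ℚ)^j * ((i+j).choose j) * (s.choose j) * (((s:ℚ)+j+1)⁻¹)
      = ∑ k ∈ Finset.range (s+1),
          ((i.choose k : ℕ) : ℚ) * ((-1:ℚ)^j * (s.choose j) * (j.choose k) * (((s:ℚ)+j+1)⁻¹)) := by
    intro j hj
    rw [vdm j hj, Finset.mul_sum, Finset.sum_mul, Finset.sum_mul]
    apply Finset.sum_congr rfl
    intro k _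
    ring
  rw [Finset.sum_congr rfl expand, Finset.sum_comm]
  have inner_eval : ∀ k ∈ Finset.range (s+1),
      ∑ j ∈ Finset.range (s+1),
          ((i.choose k : ℕ) : ℚ) * ((-1:ℚ)^j * (s.choose j) * (j.choose k) * (((s:ℚ)+j+1)⁻¹))
      = ((s.factorial : ℚ) * (s.factorial : ℚ) / ((2*s+1).factorial : ℚ))
        * ((-1:ℚ)^k * ((i.choose k : ℕ) : ℚ) * (((s+k).choose s : ℕ) : ℚ)) := by
    intro k hk
    rw [Finset.mem_range] at hk
    have hks : k ≤ s := by omega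
    rw [← Finset.mul_sum, auxInnerSum s k hks]
    -- need: C(s,k) * (s-k)! * (s+k)! = s! * s! * C(s+k, s)
    have hn1 : s.choose k * k.factorial * (s-k).factorial = s.factorial :=
      Nat.choose_mul_factorial_mul_factorial hks
    have hn2 : (s+k).choose s * s.factorial * k.factorial = (s+k).factorial := by
      have := Nat.choose_mul_factorial_mul_factorial (Nat.le_add_right s k)
      simpa [Nat.add_sub_cancel_left] using this
    have hq1 : ((s.choose k : ℕ) : ℚ) * (k.factorial : ℚ) * ((s-k).factorial : ℚ)
        = (s.factorial : ℚ) := by exact_mod_cast congrArg (Nat.cast : ℕ → ℚ) hn1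
    have hq2 : (((s+k).choose s : ℕ) : ℚ) * (s.factorial : ℚ) * (k.factorial : ℚ)
        = ((s+k).factorial : ℚ) := by exact_mod_cast congrArg (Nat.cast : ℕ → ℚ) hn2
    have hkf : (k.factorial : ℚ) ≠ 0 := by exact_mod_cast Nat.factorial_ne_zero k
    have h2sf : ((2*s+1).factorial : ℚ) ≠ 0 := by exact_mod_cast Nat.factorial_ne_zero _
    have hq3 : ((s.choose k : ℕ) : ℚ) * ((s-k).factorial : ℚ) * ((s+k).factorial : ℚ)
        = (s.factorial : ℚ) * (s.factorial : ℚ) * (((s+k).choose s : ℕ) : ℚ) := by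
      apply mul_left_cancel₀ hkf
      calc (k.factorial:ℚ) * (((s.choose k : ℕ):ℚ) * ((s-k).factorial:ℚ) * ((s+k).factorial:ℚ))
          = (((s.choose k : ℕ):ℚ) * (k.factorial:ℚ) * ((s-k).factorial:ℚ)) * ((s+k).factorial:ℚ) := by ring
        _ = (s.factorial:ℚ) * ((s+k).factorial:ℚ) := by rw [hq1]
        _ = (s.factorial:ℚ) * ((((s+k).choose s : ℕ):ℚ) * (s.factorial:ℚ) * (k.factorial:ℚ)) := by rw [hq2]
        _ = (k.factorial:ℚ) * ((s.factorial:ℚ) * (s.factorial:ℚ) * (((s+k).choose s : ℕ):ℚ)) := by ring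
    field_simp
    linear_combination (((i.choose k : ℕ):ℚ)) * hq3
  rw [Finset.sum_congr rfl inner_eval, ← Finset.mul_sum]
  have hres : ∑ k ∈ Finset.range (s+1),
      (-1:ℚ)^k * ((i.choose k : ℕ) : ℚ) * (((s+k).choose s : ℕ) : ℚ)
      = (-1:ℚ)^i * ((s.choose i : ℕ) : ℚ) := by
    have hsub : ∑ k ∈ Finset.range (s+1),
        (-1:ℚ)^k * ((i.choose k : ℕ) : ℚ) * (((s+k).choose s : ℕ) : ℚ)
        = ∑ k ∈ Finset.range (i+1),
        (-1:ℚ)^k * ((i.choose k : ℕ) : ℚ) * (((s+k).choose s : ℕ) : ℚ) := by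
      symm
      apply Finset.sum_subset
      · intro k hk; rw [Finset.mem_range] at *; omega
      · intro k _ hk
        rw [Finset.mem_range] at hk
        rw [Nat.choose_eq_zero_of_lt (by omega : i < k)]
        simp
    rw [hsub, K3 s i hi s, Nat.choose_symm hi]
  rw [hres]
  ring

theorem linear_system_solution_explicit (s i : ℕ) (hi : i ≤ s) :
    ∑ j ∈ Finset.range (s + 1),
        (-1 : ℚ) ^ j * (((i + j).factorial : ℚ) / ((i.factorial : ℚ) * (j.factorial : ℚ))) *
          (((j.factorial : ℚ) * ((2 * s + 1).factorial : ℚ)) / ((s + j + 1).factorial : ℚ)) *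
          ((1 / (s.factorial : ℚ)) * (s.choose j) * ((s + j).choose j)) =
      (-1 : ℚ) ^ i * (s.choose i) := by
  have hterm : ∀ j ∈ Finset.range (s+1),
      (-1 : ℚ) ^ j * (((i + j).factorial : ℚ) / ((i.factorial : ℚ) * (j.factorial : ℚ))) *
          (((j.factorial : ℚ) * ((2 * s + 1).factorial : ℚ)) / ((s + j + 1).factorial : ℚ)) *
          ((1 / (s.factorial : ℚ)) * (s.choose j) * ((s + j).choose j))
      = (((2*s+1).factorial : ℚ) / ((s.factorial : ℚ) * (s.factorial : ℚ)))
        * ((-1:ℚ)^j * ((i+j).choose j) * (s.choose j) * (((s:ℚ)+j+1)⁻¹)) := by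
    intro j _
    have h1 : ((i+j).factorial : ℚ) = ((i+j).choose j : ℕ) * (i.factorial : ℚ) * (j.factorial : ℚ) := by
      exact_mod_cast (congrArg (Nat.cast : ℕ → ℚ) (Nat.add_choose_mul_factorial_mul_factorial i j)).symm
    have h2 : ((s+j).factorial : ℚ) = ((s+j).choose j : ℕ) * (s.factorial : ℚ) * (j.factorial : ℚ) := by
      exact_mod_cast (congrArg (Nat.cast : ℕ → ℚ) (Nat.add_choose_mul_factorial_mul_factorial s j)).symm
    have h3 : ((s+j+1).factorial : ℚ) = ((s:ℚ)+j+1) * ((s+j).factorial : ℚ) := by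
      rw [Nat.factorial_succ]; push_cast; ring
    have hif : (i.factorial : ℚ) ≠ 0 := by exact_mod_cast Nat.factorial_ne_zero i
    have hjf : (j.factorial : ℚ) ≠ 0 := by exact_mod_cast Nat.factorial_ne_zero j
    have hsf : (s.factorial : ℚ) ≠ 0 := by exact_mod_cast Nat.factorial_ne_zero s
    have hsjf : ((s+j).factorial : ℚ) ≠ 0 := by exact_mod_cast Nat.factorial_ne_zero (s+j)
    have hsj1 : (s:ℚ)+j+1 ≠ 0 := by positivity
    have hc : (((s+j).choose j : ℕ) : ℚ) ≠ 0 :=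
      Nat.cast_ne_zero.2 (Nat.choose_pos (Nat.le_add_left j s)).ne'
    rw [h1, h3, h2]
    field_simp
  rw [Finset.sum_congr rfl hterm, ← Finset.mul_sum, K1 s i hi]
  have hsf : (s.factorial : ℚ) ≠ 0 := by exact_mod_cast Nat.factorial_ne_zero s
  have h2sf : ((2*s+1).factorial : ℚ) ≠ 0 := by exact_mod_cast Nat.factorial_ne_zero _
  field_simp
end

section
/- For natural numbers s ≥ 1, k ≥ 2s+1, and 0 ≤ l ≤ k−s, the following identity holds: ∑_{j=0}^{s} (-1)^j·C(s+j,j)·C(k,s−j)·[C(l+j,j)·(k−s) − C(l+j−1,j−1)·l] = ∑_{j=0}^{s} (-1)^j·C(s+j,j)·C(k+1,s−j)·C(l+j,j)·(k−2s). -/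
/-!
The difference of the `j`-th summands of the two sides telescopes: it equals `T j - T (j + 1)`
with `T j = (-1)^j j C(s+j, j) C(k, s-j) C(l+j-1, j-1)`. This comes down to Pascal's rule
`C(k+1, s-j) = C(k, s-j) + C(k, s-j-1)` and the three absorption identities
`(l+j) C(l+j-1, j-1) = j C(l+j, j)`, `(s-j) C(k, s-j) = (k-s+j+1) C(k, s-j-1)` and
`(j+1) C(s+j+1, j+1) = (s+j+1) C(s+j, j)`. Since `T 0 = T (s+1) = 0`, the sum vanishes.
-/

theorem Nat.cast_choose_succ_right_eq (n m : ℕ) :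
    (n.choose (m + 1) : ℤ) * (m + 1) = n.choose m * ((n : ℤ) - m) := by
  rcases le_or_gt m n with h | h
  · have := Nat.choose_succ_right_eq n m
    zify [h] at this
    exact this
  · simp [Nat.choose_eq_zero_of_lt h, Nat.choose_eq_zero_of_lt (by omega : n < m + 1)]

/-- `C(k, s - j)` with `s - j` read in `ℤ`: it vanishes for `j > s` instead of truncating. -/
def chooseSub (k s j : ℕ) : ℤ := if j ≤ s then k.choose (s - j) else 0

theorem chooseSub_of_le {k s j : ℕ} (h : j ≤ s) : chooseSub k s j = k.choose (s - j) := if_pos h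

theorem chooseSub_succ_self (k s : ℕ) : chooseSub k s (s + 1) = 0 := if_neg (by omega)

theorem cast_choose_succ_eq_chooseSub_add {k s j : ℕ} (h : j ≤ s) :
    ((k + 1).choose (s - j) : ℤ) = chooseSub k s j + chooseSub k s (j + 1) := by
  obtain rfl | hlt := h.eq_or_lt
  · simp [chooseSub]
  · obtain ⟨m, rfl⟩ := Nat.exists_eq_add_of_lt hlt
    rw [chooseSub_of_le h, chooseSub_of_le hlt, show j + m + 1 - j = m + 1 by omega,
      show j + m + 1 - (j + 1) = m by omega, Nat.choose_succ_succ']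
    push_cast
    ring

theorem sub_mul_chooseSub (k s j : ℕ) :
    ((s : ℤ) - j) * chooseSub k s j = ((k : ℤ) - s + j + 1) * chooseSub k s (j + 1) := by
  rcases lt_trichotomy j s with hlt | rfl | hgt
  · obtain ⟨m, rfl⟩ := Nat.exists_eq_add_of_lt hlt
    rw [chooseSub_of_le hlt.le, chooseSub_of_le hlt, show j + m + 1 - j = m + 1 by omega,
      show j + m + 1 - (j + 1) = m by omega]
    push_cast
    linear_combination Nat.cast_choose_succ_right_eq k m
  · simp [chooseSub]
  · simp [chooseSub, hgt.not_ge, show ¬j + 1 ≤ s by omega]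

def choosePred (l j : ℕ) : ℤ := if j = 0 then 0 else ((l + j - 1).choose (j - 1) : ℤ)

theorem choosePred_succ (l j : ℕ) : choosePred l (j + 1) = (l + j).choose j := by
  simp [choosePred]

theorem add_mul_choosePred (l j : ℕ) :
    ((l : ℤ) + j) * choosePred l j = j * (l + j).choose j := by
  cases j with
  | zero => simp [choosePred]
  | succ i =>
    rw [choosePred_succ]
    have := Nat.add_one_mul_choose_eq (l + i) i
    zify at this
    push_cast
    linear_combination this

def telescopingTerm (s k l j : ℕ) : ℤ :=
  (-1) ^ j * j * (s + j).choose j * chooseSub k s j * choosePred l j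

theorem summand_sub_summand_eq_telescopingTerm_sub {s k l j : ℕ} (hj : j ≤ s) :
    (-1 : ℤ) ^ j * ((s + j).choose j) * (k.choose (s - j)) *
          (((l + j).choose j : ℤ) * ((k : ℤ) - s) -
            (if j = 0 then 0 else ((l + j - 1).choose (j - 1) : ℤ)) * l) -
        (-1 : ℤ) ^ j * ((s + j).choose j) * ((k + 1).choose (s - j)) *
          ((l + j).choose j) * ((k : ℤ) - 2 * s) =
      telescopingTerm s k l j - telescopingTerm s k l (j + 1) := by
  have habsorb := Nat.add_one_mul_choose_eq (s + j) j
  zify at habsorb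
  rw [cast_choose_succ_eq_chooseSub_add hj, ← chooseSub_of_le hj]
  simp only [telescopingTerm, choosePred_succ]
  change _ * (_ - choosePred l j * _) - _ = _
  push_cast
  linear_combination (-1 : ℤ) ^ j * (s + j).choose j *
      (-chooseSub k s j * add_mul_choosePred l j + (l + j).choose j * sub_mul_chooseSub k s j) +
    (-1) ^ j * chooseSub k s (j + 1) * (l + j).choose j * habsorb

theorem equivariance_identity_one_general (s k l : ℕ) :
    ∑ j ∈ Finset.range (s + 1),
        (-1 : ℤ) ^ j * ((s + j).choose j) * (k.choose (s - j)) *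
          (((l + j).choose j : ℤ) * ((k : ℤ) - s) -
            (if j = 0 then 0 else ((l + j - 1).choose (j - 1) : ℤ)) * l) =
      ∑ j ∈ Finset.range (s + 1),
        (-1 : ℤ) ^ j * ((s + j).choose j) * ((k + 1).choose (s - j)) *
          ((l + j).choose j) * ((k : ℤ) - 2 * s) := by
  rw [← sub_eq_zero, ← Finset.sum_sub_distrib,
    Finset.sum_congr rfl fun j hj =>
      summand_sub_summand_eq_telescopingTerm_sub (Finset.mem_range_succ_iff.mp hj),
    Finset.sum_range_sub']
  simp [telescopingTerm, chooseSub_succ_self]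

theorem equivariance_identity_one (s k l : ℕ) (hs : 1 ≤ s) (hk : 2 * s + 1 ≤ k)
    (hl : l ≤ k - s) :
    ∑ j ∈ Finset.range (s + 1),
        (-1 : ℤ) ^ j * ((s + j).choose j) * (k.choose (s - j)) *
          (((l + j).choose j : ℤ) * ((k : ℤ) - s) -
            (if j = 0 then 0 else ((l + j - 1).choose (j - 1) : ℤ)) * l) =
      ∑ j ∈ Finset.range (s + 1),
        (-1 : ℤ) ^ j * ((s + j).choose j) * ((k + 1).choose (s - j)) *
          ((l + j).choose j) * ((k : ℤ) - 2 * s) :=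
  equivariance_identity_one_general s k l
end
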